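/- Let n be a nonnegative integer and let a, c be complex numbers with (a−n)_{2n} ≠ 0, (1−a)_n ≠ 0, (a)_n ≠ 0, and (1+c−a−n)_{2n} ≠ 0. Then _3F_2(−n, a−c−n, c ; (a−n)/2, (1+a−n)/2 ; 1/4) = [(1+c−a)_n (a−c)_n / ((1−a)_n (a)_n)] · _3F_2(−n, 1−a−n, c ; (1+c−a−n)/2, (2+c−a−n)/2 ; 1/4), both sides being finite sums over k from 0 to n. -/

import Mathlib

/-!
Put `B = a - n` and `C = a - c - n`. By the duplication formula
`(B)_{2k} = 4^k (B/2)_k ((B+1)/2)_k` and `(-n)_k = (-1)^k k! C(n,k)`, the `k`-th term of the left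
side is `(-1)^k C(n,k) (C)_k (B-C)_k / (B)_{2k}`, and Chu–Vandermonde expands
`(C)_k (B-C)_k / (B)_{2k}` as `∑_j (-1)^j C(k,j) (C)_{k+j} / (B)_{k+j}`. The coefficients
`(-1)^{k+j} C(n,k) C(k,j)` of the resulting double sum are invariant under
`(k, j) ↦ (n - j, n - k)`, which replaces `m = k + j` by `2n - m`, and the reflection
`(x)_m = (-1)^m (1 - x - m)_m` gives
`(C)_m / (B)_m = (C)_{2n} / (B)_{2n} · (1 - B - 2n)_{2n-m} / (1 - C - 2n)_{2n-m}`.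
Since `1 - C - 2n = 1 + c - a - n` and `1 - B - 2n = 1 - a - n`, the reflected double sum is the
expansion of the right side.
-/

open Finset

/-- The rising factorial (Pochhammer symbol) `(a)_k = a(a+1)⋯(a+k-1)`. -/
noncomputable def poch (a : ℂ) (k : ℕ) : ℂ := ∏ i ∈ Finset.range k, (a + i)

theorem poch_succ (a : ℂ) (k : ℕ) : poch a (k + 1) = poch a k * (a + k) :=
  prod_range_succ _ _

theorem poch_add (a : ℂ) (m r : ℕ) : poch a (m + r) = poch a m * poch (a + m) r := by
  simp only [poch, prod_range_add, Nat.cast_add, add_assoc]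

theorem poch_ne_zero_of_le {a : ℂ} {m N : ℕ} (h : poch a N ≠ 0) (hm : m ≤ N) :
    poch a m ≠ 0 := by
  obtain ⟨r, rfl⟩ := Nat.exists_eq_add_of_le hm
  exact left_ne_zero_of_mul (poch_add a m r ▸ h)

theorem poch_two_mul (x : ℂ) (k : ℕ) :
    poch x (2 * k) = poch (x / 2) k * poch ((x + 1) / 2) k * 4 ^ k := by
  induction k with
  | zero => simp [poch]
  | succ k ih =>
    rw [Nat.mul_succ, poch_succ, poch_succ, poch_succ, poch_succ, ih]
    push_cast
    ring

section Pochhammer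

open Polynomial

theorem poch_eq_eval_ascPochhammer (a : ℂ) (k : ℕ) :
    poch a k = (ascPochhammer ℂ k).eval a := by
  induction k with
  | zero => simp [poch]
  | succ k ih => rw [poch_succ, ih, ascPochhammer_succ_eval]

theorem poch_reflect (a : ℂ) (k : ℕ) : poch a k = (-1) ^ k * poch (1 - a - k) k := by
  rw [poch_eq_eval_ascPochhammer, ← neg_neg a, ascPochhammer_eval_neg_eq_descPochhammer,
    descPochhammer_eval_eq_ascPochhammer, poch_eq_eval_ascPochhammer, neg_neg,
    show -a - k + 1 = 1 - a - k by ring]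

theorem poch_neg_natCast (n k : ℕ) : poch (-n) k = (-1) ^ k * k.factorial * n.choose k := by
  rw [poch_eq_eval_ascPochhammer, ascPochhammer_eval_neg_eq_descPochhammer,
    descPochhammer_eval_eq_descFactorial, Nat.descFactorial_eq_factorial_mul_choose]
  push_cast
  ring

theorem descPochhammer_smeval_eq_poch (r : ℂ) (k : ℕ) :
    (descPochhammer ℤ k).smeval r = poch (r - k + 1) k := by
  rw [descPochhammer_smeval_eq_ascPochhammer, ascPochhammer_smeval_eq_eval,
    poch_eq_eval_ascPochhammer]

theorem poch_chu_vandermonde (x y : ℂ) (k : ℕ) :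
    poch (x + y - k + 1) k = ∑ i ∈ range (k + 1),
      k.choose i * (poch (x - i + 1) i * poch (y - (k - i : ℕ) + 1) (k - i)) := by
  have := Ring.descPochhammer_smeval_add k (Commute.all x y)
  simp only [descPochhammer_smeval_eq_poch] at this
  rw [this, Nat.sum_antidiagonal_eq_sum_range_succ
    (fun i j => (k.choose i : ℂ) * (poch (x - i + 1) i * poch (y - j + 1) j))]

end Pochhammer

theorem poch_sub_two_mul (x : ℂ) (n : ℕ) :
    poch (x - n) (2 * n) = (-1) ^ n * poch (1 - x) n * poch x n := by
  rw [two_mul, poch_add, poch_reflect (x - n), sub_add_cancel,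
    show 1 - (x - n) - n = 1 - x by ring, mul_assoc]

-- Chu–Vandermonde `₂F₁(-k, β; γ; 1) = (γ - β)_k / (γ)_k`, multiplied through by
-- `(γ)_k = (γ)_j (γ + j)_{k-j}`.
theorem sum_neg_one_pow_mul_choose_mul_poch (β γ : ℂ) (k : ℕ) :
    ∑ j ∈ range (k + 1), (-1) ^ j * k.choose j * poch β j * poch (γ + j) (k - j) =
      poch (γ - β) k := by
  rw [show γ - β = -β + (γ + k - 1) - k + 1 by ring, poch_chu_vandermonde]
  refine sum_congr rfl fun j hj => ?_
  rw [poch_reflect (-β - j + 1), show 1 - (-β - j + 1) - j = β by ring,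
    Nat.cast_sub (Nat.le_of_lt_succ (mem_range.1 hj)),
    show γ + k - 1 - (k - j) + 1 = γ + j by ring]
  ring

theorem poch_mul_poch_div_poch_two_mul (B C : ℂ) (k : ℕ) (hB : poch B (2 * k) ≠ 0) :
    poch C k * poch (B - C) k / poch B (2 * k) =
      ∑ j ∈ range (k + 1), (-1) ^ j * k.choose j * (poch C (k + j) / poch B (k + j)) := by
  rw [show B - C = B + k - (C + k) by ring, ← sum_neg_one_pow_mul_choose_mul_poch, mul_sum,
    sum_div]
  refine sum_congr rfl fun j hj => ?_
  have hjk := Nat.le_of_lt_succ (mem_range.1 hj)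
  have hsplit : poch B (2 * k) = poch B (k + j) * poch (B + k + j) (k - j) := by
    rw [add_assoc, ← Nat.cast_add, ← poch_add]
    congr 1
    omega
  have hBkj : poch B (k + j) ≠ 0 := poch_ne_zero_of_le hB (by omega)
  have hrest : poch (B + k + j) (k - j) ≠ 0 := right_ne_zero_of_mul (hsplit ▸ hB)
  rw [hsplit, poch_add C k j]
  field_simp

theorem hypergeometric_term_eq_sum (n k : ℕ) (B C : ℂ) (hB : poch B (2 * k) ≠ 0) :
    poch (-n) k * poch C k * poch (B - C) k /
        (k.factorial * poch (B / 2) k * poch ((B + 1) / 2) k) * (1 / 4) ^ k =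
      ∑ j ∈ range (k + 1),
        (-1) ^ (k + j) * (n.choose k * k.choose j : ℕ) * (poch C (k + j) / poch B (k + j)) := by
  have hdup := poch_two_mul B k
  have hfac : (k.factorial : ℂ) ≠ 0 := Nat.cast_ne_zero.2 k.factorial_ne_zero
  calc _ = (-1) ^ k * n.choose k * (poch C k * poch (B - C) k / poch B (2 * k)) := by
        rw [poch_neg_natCast, hdup, one_div, inv_pow]
        field_simp
    _ = _ := by
        rw [poch_mul_poch_div_poch_two_mul B C k hB, mul_sum]
        refine sum_congr rfl fun j _ => ?_
        push_cast
        ring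

theorem sum_range_sum_range_succ_reflect {M : Type*} [AddCommMonoid M] (n : ℕ)
    (f : ℕ → ℕ → M) :
    ∑ k ∈ range (n + 1), ∑ j ∈ range (k + 1), f k j =
      ∑ k ∈ range (n + 1), ∑ j ∈ range (k + 1), f (n - j) (n - k) := by
  rw [sum_sigma', sum_sigma']
  refine sum_nbij' (fun p => ⟨n - p.2, n - p.1⟩) (fun p => ⟨n - p.2, n - p.1⟩)
    ?_ ?_ ?_ ?_ ?_ <;> rintro ⟨k, j⟩ hp <;>
    simp only [mem_sigma, mem_range, Sigma.mk.injEq, heq_eq_eq] at hp ⊢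
  all_goals first | omega | congr 1 <;> omega

theorem Nat.choose_sub_mul_choose_sub {n k j : ℕ} (hjk : j ≤ k) (hkn : k ≤ n) :
    n.choose (n - j) * (n - j).choose (n - k) = n.choose k * k.choose j := by
  rw [Nat.choose_mul hjk, Nat.choose_symm (hjk.trans hkn),
    ← Nat.choose_symm (show n - k ≤ n - j by omega), show n - j - (n - k) = k - j by omega]

noncomputable def pochRatioSum (n : ℕ) (B C : ℂ) : ℂ :=
  ∑ k ∈ range (n + 1), ∑ j ∈ range (k + 1),
    (-1) ^ (k + j) * (n.choose k * k.choose j : ℕ) * (poch C (k + j) / poch B (k + j))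

theorem sum_hypergeometric_term_eq_pochRatioSum (n : ℕ) (B C : ℂ) (hB : poch B (2 * n) ≠ 0) :
    ∑ k ∈ range (n + 1), poch (-n) k * poch C k * poch (B - C) k /
        (k.factorial * poch (B / 2) k * poch ((B + 1) / 2) k) * (1 / 4) ^ k =
      pochRatioSum n B C :=
  sum_congr rfl fun k hk => hypergeometric_term_eq_sum n k B C
    (poch_ne_zero_of_le hB (by have := mem_range.1 hk; omega))

theorem poch_div_poch_eq_mul_poch_div_poch {B C B' C' : ℂ} {m r : ℕ}
    (hB : poch B (m + r) ≠ 0) (hB' : poch B' (m + r) ≠ 0)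
    (hBC' : B + C' + (m + r : ℕ) = 1) (hCB' : C + B' + (m + r : ℕ) = 1) :
    poch C m / poch B m = poch C (m + r) / poch B (m + r) * (poch C' r / poch B' r) := by
  have hsplit : ∀ x y : ℂ, x + y + (m + r : ℕ) = 1 →
      poch x (m + r) = (-1) ^ r * poch x m * poch y r := by
    intro x y hxy
    rw [poch_add, poch_reflect (x + m),
      show 1 - (x + m) - r = y by push_cast at hxy; linear_combination -hxy]
    ring
  rw [hsplit B C' hBC', hsplit C B' hCB']
  rw [hsplit B C' hBC'] at hB
  have hBm : poch B m ≠ 0 := right_ne_zero_of_mul (left_ne_zero_of_mul hB)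
  have hC'r : poch C' r ≠ 0 := right_ne_zero_of_mul hB
  have hB'r : poch B' r ≠ 0 := poch_ne_zero_of_le hB' (by omega)
  field_simp

theorem pochRatioSum_reflect (n : ℕ) {B C B' C' : ℂ}
    (hB : poch B (2 * n) ≠ 0) (hB' : poch B' (2 * n) ≠ 0)
    (hBC' : B + C' + 2 * n = 1) (hCB' : C + B' + 2 * n = 1) :
    pochRatioSum n B C = poch C (2 * n) / poch B (2 * n) * pochRatioSum n B' C' := by
  rw [pochRatioSum, sum_range_sum_range_succ_reflect, pochRatioSum, mul_sum]
  refine sum_congr rfl fun k hk => ?_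
  rw [mul_sum]
  refine sum_congr rfl fun j hj => ?_
  have hkn := Nat.le_of_lt_succ (mem_range.1 hk)
  have hjk := Nat.le_of_lt_succ (mem_range.1 hj)
  have hsum : n - j + (n - k) + (k + j) = 2 * n := by omega
  have hsign : (-1 : ℂ) ^ (n - j + (n - k)) = (-1) ^ (k + j) := by
    rw [neg_one_pow_eq_pow_mod_two, neg_one_pow_eq_pow_mod_two (k + j)]
    congr 1
    omega
  rw [hsign, Nat.choose_sub_mul_choose_sub hjk hkn,
    poch_div_poch_eq_mul_poch_div_poch (C' := C') (B' := B') (hsum ▸ hB) (hsum ▸ hB')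
      (by rw [hsum]; push_cast; linear_combination hBC')
      (by rw [hsum]; push_cast; linear_combination hCB'), hsum]
  ring

theorem stmt_15_general (n : ℕ) (a c : ℂ)
    (han : poch (a - (n : ℂ)) (2 * n) ≠ 0)
    (hca : poch (1 + c - a - (n : ℂ)) (2 * n) ≠ 0) :
    ∑ k ∈ range (n + 1),
      (poch (-(n : ℂ)) k * poch (a - c - (n : ℂ)) k * poch c k) /
        ((Nat.factorial k : ℂ) * poch ((a - (n : ℂ)) / 2) k *
          poch ((1 + a - (n : ℂ)) / 2) k) * (1 / 4 : ℂ) ^ k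
    = poch (1 + c - a) n * poch (a - c) n / (poch (1 - a) n * poch a n) *
      ∑ k ∈ range (n + 1),
        (poch (-(n : ℂ)) k * poch (1 - a - (n : ℂ)) k * poch c k) /
          ((Nat.factorial k : ℂ) * poch ((1 + c - a - (n : ℂ)) / 2) k *
            poch ((2 + c - a - (n : ℂ)) / 2) k) * (1 / 4 : ℂ) ^ k := by
  have hL := sum_hypergeometric_term_eq_pochRatioSum n (a - n) (a - c - n) han
  have hR := sum_hypergeometric_term_eq_pochRatioSum n (1 + c - a - n) (1 - a - n) hca
  rw [show a - n - (a - c - n) = c by ring, show (a - n + 1) / 2 = (1 + a - n) / 2 by ring] at hL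
  rw [show 1 + c - a - n - (1 - a - n) = c by ring,
    show (1 + c - a - n + 1) / 2 = (2 + c - a - n) / 2 by ring] at hR
  have hprefactor : poch (1 + c - a) n * poch (a - c) n / (poch (1 - a) n * poch a n) =
      poch (a - c - n) (2 * n) / poch (a - n) (2 * n) := by
    rw [poch_sub_two_mul, poch_sub_two_mul, show 1 - (a - c) = 1 + c - a by ring, mul_assoc,
      mul_assoc, mul_div_mul_left _ _ (pow_ne_zero n (neg_ne_zero.2 one_ne_zero))]
  rw [hL, hR, hprefactor, pochRatioSum_reflect n (C' := 1 - a - n) han hca (by ring) (by ring)]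

theorem stmt_15 (n : ℕ) (a c : ℂ)
    (han : poch (a - (n : ℂ)) (2 * n) ≠ 0) (h1a : poch (1 - a) n ≠ 0)
    (ha : poch a n ≠ 0) (hca : poch (1 + c - a - (n : ℂ)) (2 * n) ≠ 0) :
    ∑ k ∈ range (n + 1),
      (poch (-(n : ℂ)) k * poch (a - c - (n : ℂ)) k * poch c k) /
        ((Nat.factorial k : ℂ) * poch ((a - (n : ℂ)) / 2) k *
          poch ((1 + a - (n : ℂ)) / 2) k) * (1 / 4 : ℂ) ^ k
    = poch (1 + c - a) n * poch (a - c) n / (poch (1 - a) n * poch a n) *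
      ∑ k ∈ range (n + 1),
        (poch (-(n : ℂ)) k * poch (1 - a - (n : ℂ)) k * poch c k) /
          ((Nat.factorial k : ℂ) * poch ((1 + c - a - (n : ℂ)) / 2) k *
            poch ((2 + c - a - (n : ℂ)) / 2) k) * (1 / 4 : ℂ) ^ k :=
  stmt_15_general n a c han hca
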